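/- arXiv:2208.14677 — 3 statements merged into one kernel-verified Lean document; each statement's English description precedes it below -/
import Mathlib

section
/- The function l(p) = c / ((1 + a·p)^b − d) + e is strictly convex on the set {p > 0 : (1 + a·p)^b > d}, where a, c > 0, b ≥ 1, d ≥ 1, and e ∈ ℝ. -/
/-!
Write `σ p = (1 + a p)⁻ᵇ`. On the domain, `l = (c / d) (1 - d σ)⁻¹ + (e - c / d)`.
The map `x ↦ x⁻ᵇ = (x⁻¹)ᵇ` is strictly convex on `(0, ∞)` for `b ≥ 1`, hence so is `σ`, and
`s ↦ (1 - d s)⁻¹` is convex and strictly increasing where `1 - d s > 0`. A convex strictly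
increasing function of a strictly convex one is strictly convex.
-/

open Set

section

variable {𝕜 E β γ : Type*} [Semiring 𝕜] [PartialOrder 𝕜] [AddCommMonoid E] [AddCommMonoid β]
  [PartialOrder β] [AddCommMonoid γ] [PartialOrder γ] [SMul 𝕜 E] [SMul 𝕜 β] [SMul 𝕜 γ]
  {s : Set E} {t : Set β} {f : E → β} {g : β → γ}

theorem ConvexOn.comp_strictConvexOn_of_mapsTo (hg : ConvexOn 𝕜 t g) (hf : StrictConvexOn 𝕜 s f)
    (hst : MapsTo f s t) (hg' : StrictMonoOn g t) : StrictConvexOn 𝕜 s (g ∘ f) :=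
  ⟨hf.1, fun _ hx _ hy hxy _ _ ha hb hab =>
    (hg' (hst (hf.1 hx hy ha.le hb.le hab)) (hg.1 (hst hx) (hst hy) ha.le hb.le hab)
      (hf.2 hx hy hxy ha hb hab)).trans_le (hg.2 (hst hx) (hst hy) ha.le hb.le hab)⟩

end

theorem StrictConvexOn.comp_const_add_mul {t : Set ℝ} {g : ℝ → ℝ} (hg : StrictConvexOn ℝ t g)
    {a : ℝ} (ha : a ≠ 0) (c : ℝ) :
    StrictConvexOn ℝ ((fun x => c + a * x) ⁻¹' t) fun x => g (c + a * x) := by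
  have affine : ∀ x y α β : ℝ, α + β = 1 →
      c + a * (α • x + β • y) = α • (c + a * x) + β • (c + a * y) := by
    intro x y α β h
    simp only [smul_eq_mul]
    linear_combination c * h.symm
  refine ⟨fun x hx y hy α β hα hβ hαβ => ?_, fun x hx y hy hxy α β hα hβ hαβ => ?_⟩
  · simpa only [mem_preimage, affine x y α β hαβ] using hg.1 hx hy hα hβ hαβ
  · show g (c + a * (α • x + β • y)) < α • g (c + a * x) + β • g (c + a * y)
    rw [affine x y α β hαβ]
    exact hg.2 hx hy (by simpa [ha] using hxy) hα hβ hαβ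

theorem strictConvexOn_inv : StrictConvexOn ℝ (Ioi 0) fun x : ℝ => x⁻¹ :=
  (strictConvexOn_zpow (m := -1) (by norm_num) (by norm_num)).congr fun x _ => zpow_neg_one x

theorem strictConvexOn_rpow_neg {b : ℝ} (hb : 1 ≤ b) :
    StrictConvexOn ℝ (Ioi 0) fun x : ℝ => x ^ (-b) :=
  ((convexOn_rpow hb).comp_strictConvexOn_of_mapsTo strictConvexOn_inv
      (fun _ hx => mem_Ici.2 (inv_pos.2 hx).le)
      (Real.strictMonoOn_rpow_Ici_of_exponent_pos (by linarith))).congr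
    fun x hx => by simp [Real.inv_rpow (le_of_lt hx), Real.rpow_neg (le_of_lt hx)]

theorem strictConvexOn_inv_one_sub_mul {d : ℝ} (hd : d ≠ 0) :
    StrictConvexOn ℝ {s | 0 < 1 - d * s} fun s : ℝ => (1 - d * s)⁻¹ := by
  have h := strictConvexOn_inv.comp_const_add_mul (neg_ne_zero.2 hd) 1
  simp only [neg_mul, ← sub_eq_add_neg] at h
  exact h

theorem strictMonoOn_inv_one_sub_mul {d : ℝ} (hd : 0 < d) :
    StrictMonoOn (fun s : ℝ => (1 - d * s)⁻¹) {s | 0 < 1 - d * s} := fun s hs t ht hst =>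
  (inv_lt_inv₀ hs ht).2 (by nlinarith)

theorem convex_setOf_pos_lt_rpow {a b : ℝ} (ha : 0 ≤ a) (hb : 0 ≤ b) (d : ℝ) :
    Convex ℝ {p : ℝ | 0 < p ∧ d < (1 + a * p) ^ b} :=
  MonotoneOn.convex_gt (s := Ioi 0) (fun p (hp : 0 < p) q _ hpq => by gcongr)
    (convex_Ioi 0) d

theorem div_sub_add_eq_inv_one_sub_mul_inv {c d x : ℝ} (hd : 0 < d) (hx : d < x) (e : ℝ) :
    c / (x - d) + e = c / d * (1 - d * x⁻¹)⁻¹ + (e - c / d) := by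
  have hx₀ : x ≠ 0 := by linarith
  have hxd : x - d ≠ 0 := by linarith
  rw [show 1 - d * x⁻¹ = (x - d) / x by field_simp]
  field_simp
  ring

/-- The LQR-cost function `l(p) = c / ((1 + a·p)^b − d) + e` is strictly convex
on `{p > 0 : (1 + a·p)^b > d}`, for `a, c > 0`, `b ≥ 1`, `d ≥ 1`, `e ∈ ℝ`. -/
theorem stmt_1 (a b c d e : ℝ) (ha : 0 < a) (hb : 1 ≤ b) (hc : 0 < c) (hd : 1 ≤ d) :
    StrictConvexOn ℝ {p : ℝ | 0 < p ∧ d < (1 + a * p) ^ b}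
      (fun p : ℝ => c / ((1 + a * p) ^ b - d) + e) := by
  set S := {p : ℝ | 0 < p ∧ d < (1 + a * p) ^ b}
  have hd₀ : 0 < d := by linarith
  have base_pos : ∀ p ∈ S, 0 < 1 + a * p := fun p hp => by have := hp.1; positivity
  have hσ : StrictConvexOn ℝ S fun p => (1 + a * p) ^ (-b) :=
    ((strictConvexOn_rpow_neg hb).comp_const_add_mul ha.ne' 1).subset base_pos
      (convex_setOf_pos_lt_rpow ha.le (by linarith) d)
  set J := fun s : ℝ => c / d * (1 - d * s)⁻¹ + (e - c / d)
  have hJ : ConvexOn ℝ {s | 0 < 1 - d * s} J :=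
    ((strictConvexOn_inv_one_sub_mul hd₀.ne').convexOn.smul (by positivity)).add_const _
  have hJ' : StrictMonoOn J {s | 0 < 1 - d * s} := fun s hs t ht hst =>
    add_lt_add_left (mul_lt_mul_of_pos_left (strictMonoOn_inv_one_sub_mul hd₀ hs ht hst)
      (by positivity)) _
  have hmaps : MapsTo (fun p => (1 + a * p) ^ (-b)) S {s | 0 < 1 - d * s} := fun p hp => by
    simp only [mem_ofPred_eq, Real.rpow_neg (base_pos p hp).le, ← div_eq_mul_inv, sub_pos]
    exact (div_lt_one (by linarith [hp.2])).2 hp.2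
  refine (hJ.comp_strictConvexOn_of_mapsTo hσ hmaps hJ').congr fun p hp => ?_
  simp only [J, Function.comp, Real.rpow_neg (base_pos p hp).le]
  exact (div_sub_add_eq_inv_one_sub_mul_inv hd₀ hp.2 e).symm
end

section
/- Let K ≥ 1, and for each k let h_k ∈ ℝ, g_k > 0, σ² > 0, B, T > 0, n > 0. Consider the KKT system: for all k, 2BT·2^(2h_k/n)·N_k·g_k·(1 + g_k p_k/σ²)^(2BT/n − 1) / (σ²·((1 + g_k p_k/σ²)^(2BT/n) − 2^(2h_k/n))²) = λ, with λ > 0 and each (1 + g_k p_k/σ²)^(2BT/n) > 2^(2h_k/n). If (p_k), (p'_k) both solve the system with multipliers λ, λ' and Σ p_k = Σ p'_k, then p_k = p'_k for all k. -/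
open Real

/-- The base must be positive: a negative base is incompatible with
`c < b ^ a` and `0 < b ^ (a - 1)` (real powers). -/
lemma stmt5_base_pos {a c b : ℝ} (ha : 0 < a) (hc : 0 < c)
    (h1 : c < b ^ a) (h2 : 0 < b ^ (a - 1)) : 0 < b := by
  rcases lt_trichotomy b 0 with hb | hb | hb
  · exfalso
    rw [Real.rpow_def_of_neg hb] at h1 h2
    have hcos : 0 < Real.cos (a * Real.pi) := by
      by_contra hcon
      push_neg at hcon
      nlinarith [Real.exp_pos (Real.log b * a)]
    have hcos' : Real.cos ((a - 1) * Real.pi) = - Real.cos (a * Real.pi) := by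
      rw [sub_mul, one_mul, Real.cos_sub_pi]
    rw [hcos'] at h2
    nlinarith [Real.exp_pos (Real.log b * (a - 1))]
  · subst hb
    rw [Real.zero_rpow ha.ne'] at h1
    linarith
  · exact hb

/-- Strict anti-monotonicity of `b ↦ b^(a-1) / (b^a - c)^2` on the feasible domain. -/
lemma stmt5_key_ineq {a c b1 b2 : ℝ} (ha : 0 < a) (hc : 0 < c)
    (hb1 : 0 < b1) (hb : b1 < b2)
    (h1 : c < b1 ^ a) (h2 : c < b2 ^ a) :
    b2 ^ (a - 1) / (b2 ^ a - c) ^ 2 < b1 ^ (a - 1) / (b1 ^ a - c) ^ 2 := by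
  have hb2 : 0 < b2 := hb1.trans hb
  have hu : b1 ^ a < b2 ^ a := Real.rpow_lt_rpow hb1.le hb ha
  set u1 := b1 ^ a with hu1def
  set u2 := b2 ^ a with hu2def
  have hu1p : 0 < u1 := hc.trans h1
  have hu2p : 0 < u2 := hc.trans h2
  have hd1 : 0 < (u1 - c) ^ 2 := pow_pos (sub_pos.mpr h1) 2
  have hd2 : 0 < (u2 - c) ^ 2 := pow_pos (sub_pos.mpr h2) 2
  have e1 : b1 ^ (a - 1) = u1 / b1 := by
    rw [hu1def, Real.rpow_sub hb1, Real.rpow_one]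
  have e2 : b2 ^ (a - 1) = u2 / b2 := by
    rw [hu2def, Real.rpow_sub hb2, Real.rpow_one]
  rw [e1, e2, div_div, div_div, div_lt_div_iff₀ (by positivity) (by positivity)]
  -- goal : u2 * (b1 * (u1 - c)^2) < u1 * (b2 * (u2 - c)^2)
  have core : u2 * (u1 - c) ^ 2 < u1 * (u2 - c) ^ 2 := by
    nlinarith [mul_pos (sub_pos.mpr hu) (show (0:ℝ) < u1 * u2 - c ^ 2 by nlinarith)]
  calc u2 * (b1 * (u1 - c) ^ 2) = (u2 * (u1 - c) ^ 2) * b1 := by ring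
    _ < (u1 * (u2 - c) ^ 2) * b1 := by exact mul_lt_mul_of_pos_right core hb1
    _ ≤ (u1 * (u2 - c) ^ 2) * b2 := by
        exact mul_le_mul_of_nonneg_left hb.le (by positivity)
    _ = u1 * (b2 * (u2 - c) ^ 2) := by ring

/-- Comparison step: if `lam ≤ lam'` then `p' ≤ p` pointwise. -/
lemma stmt5_aux (K : ℕ) (h g N : Fin K → ℝ) (σ2 B T n : ℝ)
    (hσ : 0 < σ2) (hB : 0 < B) (hT : 0 < T) (hn : 0 < n)
    (hg : ∀ k, 0 < g k) (hN : ∀ k, 0 < N k)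
    (p p' : Fin K → ℝ) (lam lam' : ℝ) (hlam : 0 < lam) (hlam' : 0 < lam')
    (hdom : ∀ k, (2 : ℝ) ^ (2 * h k / n) < (1 + g k * p k / σ2) ^ (2 * B * T / n))
    (hdom' : ∀ k, (2 : ℝ) ^ (2 * h k / n) < (1 + g k * p' k / σ2) ^ (2 * B * T / n))
    (heq : ∀ k, 2 * B * T * (2 : ℝ) ^ (2 * h k / n) * N k * g k *
        (1 + g k * p k / σ2) ^ (2 * B * T / n - 1) /
        (σ2 * ((1 + g k * p k / σ2) ^ (2 * B * T / n) - (2 : ℝ) ^ (2 * h k / n)) ^ 2) = lam)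
    (heq' : ∀ k, 2 * B * T * (2 : ℝ) ^ (2 * h k / n) * N k * g k *
        (1 + g k * p' k / σ2) ^ (2 * B * T / n - 1) /
        (σ2 * ((1 + g k * p' k / σ2) ^ (2 * B * T / n) - (2 : ℝ) ^ (2 * h k / n)) ^ 2) = lam')
    (hll : lam ≤ lam') : ∀ k, p' k ≤ p k := by
  intro k
  by_contra hcon
  push_neg at hcon
  set a : ℝ := 2 * B * T / n with hadef
  have ha : 0 < a := by positivity
  set c : ℝ := (2 : ℝ) ^ (2 * h k / n) with hcdef
  have hc : 0 < c := Real.rpow_pos_of_pos two_pos _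
  set b : ℝ := 1 + g k * p k / σ2 with hbdef
  set b' : ℝ := 1 + g k * p' k / σ2 with hb'def
  have hbb : b < b' := by
    rw [hbdef, hb'def]
    have h2 : (0:ℝ) < σ2⁻¹ := inv_pos.mpr hσ
    have := mul_lt_mul_of_pos_right (mul_lt_mul_of_pos_left hcon (hg k)) h2
    have e : ∀ x : ℝ, g k * x / σ2 = g k * x * σ2⁻¹ := fun x => div_eq_mul_inv _ _
    rw [e, e]
    linarith
  -- positivity of the (a-1) powers from the KKT equations
  have hK0 : 0 < 2 * B * T * c * N k * g k :=
    mul_pos (mul_pos (mul_pos (by positivity) hc) (hN k)) (hg k)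
  have hD : 0 < σ2 * (b ^ a - c) ^ 2 :=
    mul_pos hσ (pow_pos (sub_pos.mpr (hdom k)) 2)
  have hD' : 0 < σ2 * (b' ^ a - c) ^ 2 :=
    mul_pos hσ (pow_pos (sub_pos.mpr (hdom' k)) 2)
  have hNum : 2 * B * T * c * N k * g k * b ^ (a - 1) = lam * (σ2 * (b ^ a - c) ^ 2) :=
    (div_eq_iff hD.ne').mp (heq k)
  have hNum' : 2 * B * T * c * N k * g k * b' ^ (a - 1) = lam' * (σ2 * (b' ^ a - c) ^ 2) :=
    (div_eq_iff hD'.ne').mp (heq' k)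
  have hpow : 0 < b ^ (a - 1) := by
    by_contra hx
    push_neg at hx
    nlinarith [mul_pos hlam hD]
  have hpow' : 0 < b' ^ (a - 1) := by
    by_contra hx
    push_neg at hx
    nlinarith [mul_pos hlam' hD']
  have hbpos : 0 < b := stmt5_base_pos ha hc (hdom k) hpow
  have key := stmt5_key_ineq ha hc hbpos hbb (hdom k) (hdom' k)
  have e1 : lam = (2 * B * T * c * N k * g k / σ2) * (b ^ (a - 1) / (b ^ a - c) ^ 2) := by
    rw [div_mul_div_comm, eq_comm, div_eq_iff hD.ne']
    linarith [hNum]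
  have e2 : lam' = (2 * B * T * c * N k * g k / σ2) * (b' ^ (a - 1) / (b' ^ a - c) ^ 2) := by
    rw [div_mul_div_comm, eq_comm, div_eq_iff hD'.ne']
    linarith [hNum']
  have : lam' < lam := by
    rw [e1, e2]
    exact mul_lt_mul_of_pos_left key (div_pos hK0 hσ)
  linarith

/-- Uniqueness of the KKT point of the control-oriented power allocation problem:
two solutions of the KKT system (11)/(12) with the same total power coincide. -/
theorem stmt_5 (K : ℕ) (hK : 1 ≤ K) (h g N : Fin K → ℝ) (σ2 B T n : ℝ)
    (hσ : 0 < σ2) (hB : 0 < B) (hT : 0 < T) (hn : 0 < n)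
    (hg : ∀ k, 0 < g k) (hN : ∀ k, 0 < N k)
    (p p' : Fin K → ℝ) (lam lam' : ℝ) (hlam : 0 < lam) (hlam' : 0 < lam')
    (hdom : ∀ k, (2 : ℝ) ^ (2 * h k / n) < (1 + g k * p k / σ2) ^ (2 * B * T / n))
    (hdom' : ∀ k, (2 : ℝ) ^ (2 * h k / n) < (1 + g k * p' k / σ2) ^ (2 * B * T / n))
    (heq : ∀ k, 2 * B * T * (2 : ℝ) ^ (2 * h k / n) * N k * g k *
        (1 + g k * p k / σ2) ^ (2 * B * T / n - 1) /
        (σ2 * ((1 + g k * p k / σ2) ^ (2 * B * T / n) - (2 : ℝ) ^ (2 * h k / n)) ^ 2) = lam)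
    (heq' : ∀ k, 2 * B * T * (2 : ℝ) ^ (2 * h k / n) * N k * g k *
        (1 + g k * p' k / σ2) ^ (2 * B * T / n - 1) /
        (σ2 * ((1 + g k * p' k / σ2) ^ (2 * B * T / n) - (2 : ℝ) ^ (2 * h k / n)) ^ 2) = lam')
    (hsum : ∑ k, p k = ∑ k, p' k) : p = p' := by
  funext k
  rcases le_total lam lam' with hll | hll
  · have hle : ∀ j, p' j ≤ p j :=
      stmt5_aux K h g N σ2 B T n hσ hB hT hn hg hN p p' lam lam' hlam hlam'
        hdom hdom' heq heq' hll
    have := (Finset.sum_eq_sum_iff_of_le (fun j _ => hle j)).mp hsum.symm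
    exact (this k (Finset.mem_univ k)).symm
  · have hle : ∀ j, p j ≤ p' j :=
      stmt5_aux K h g N σ2 B T n hσ hB hT hn hg hN p' p lam' lam hlam' hlam
        hdom' hdom heq' heq hll
    exact (Finset.sum_eq_sum_iff_of_le (fun j _ => hle j)).mp hsum k (Finset.mem_univ k)
end

section
/- Under the closed-form allocation p_k = (P + Σ_j σ²/g_j)·(C_k)^(n/(2BT+n))·(σ²/g_k)^(2BT/(2BT+n)) / (Σ_j (C_j)^(n/(2BT+n))·(σ²/g_j)^(2BT/(2BT+n))) − σ²/g_k with C_k = |det M_k|^(1/n)·2^(2h_k/n)·N_k, the power p_k is strictly increasing in h_k (all other parameters held fixed), provided the denominator sum treats C_k as variable. -/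
/-- Remark 2: in the closed-form allocation of Proposition 2, the power allocated to loop `k`
is strictly increasing in its intrinsic entropy rate `h_k` (with `C_k = m·2^(2h/n)·N_k`
treated as variable in the normalizing sum, all other parameters fixed). -/
theorem stmt_8 (K : ℕ) (hK : 2 ≤ K) (B T n σ2 P m Nk : ℝ)
    (hB : 0 < B) (hT : 0 < T) (hn : 0 < n) (hσ : 0 < σ2) (hP : 0 < P)
    (hm : 0 < m) (hNk : 0 < Nk)
    (g : Fin K → ℝ) (hg : ∀ j, 0 < g j) (C : Fin K → ℝ) (hC : ∀ j, 0 < C j) (k : Fin K) :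
    StrictMono (fun h : ℝ =>
      (P + ∑ j, σ2 / g j) * (m * (2 : ℝ) ^ (2 * h / n) * Nk) ^ (n / (2 * B * T + n)) *
          (σ2 / g k) ^ (2 * B * T / (2 * B * T + n)) /
        ((∑ j ∈ Finset.univ.erase k,
            (C j) ^ (n / (2 * B * T + n)) * (σ2 / g j) ^ (2 * B * T / (2 * B * T + n))) +
          (m * (2 : ℝ) ^ (2 * h / n) * Nk) ^ (n / (2 * B * T + n)) *
            (σ2 / g k) ^ (2 * B * T / (2 * B * T + n))) -
        σ2 / g k) := by
  have hden : 0 < 2 * B * T + n := by positivity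
  set e1 := n / (2 * B * T + n) with he1
  set e2 := 2 * B * T / (2 * B * T + n) with he2
  have he1pos : 0 < e1 := by positivity
  -- S > 0
  set S := ∑ j ∈ Finset.univ.erase k,
      (C j) ^ e1 * (σ2 / g j) ^ e2 with hS
  have hSne : (Finset.univ.erase k).Nonempty := by
    rw [← Finset.card_pos, Finset.card_erase_of_mem (Finset.mem_univ k), Finset.card_univ,
      Fintype.card_fin]
    omega
  have hSpos : 0 < S := by
    apply Finset.sum_pos _ hSne
    intro j _
    have := hC j
    have := hg j
    positivity
  set A := P + ∑ j, σ2 / g j with hA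
  have hApos : 0 < A := by
    have : 0 ≤ ∑ j : Fin K, σ2 / g j :=
      Finset.sum_nonneg fun j _ => le_of_lt (by have := hg j; positivity)
    rw [hA]; linarith
  set c := (σ2 / g k) ^ e2 with hc
  have hcpos : 0 < c := by have := hg k; positivity
  intro h1 h2 hlt
  set x1 := (m * (2 : ℝ) ^ (2 * h1 / n) * Nk) ^ e1 * c with hx1
  set x2 := (m * (2 : ℝ) ^ (2 * h2 / n) * Nk) ^ e1 * c with hx2
  have hx1pos : 0 < x1 := by positivity
  have hx2pos : 0 < x2 := by positivity
  have hxlt : x1 < x2 := by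
    apply mul_lt_mul_of_pos_right _ hcpos
    apply Real.rpow_lt_rpow (by positivity) _ he1pos
    apply mul_lt_mul_of_pos_right _ hNk
    apply mul_lt_mul_of_pos_left _ hm
    exact Real.rpow_lt_rpow_left_iff (by norm_num) |>.mpr (by gcongr)
  simp only []
  have key : A * x1 / (S + x1) < A * x2 / (S + x2) := by
    rw [div_lt_div_iff₀ (by linarith) (by linarith)]
    nlinarith [mul_pos hApos hSpos]
  have e : ∀ x : ℝ, A * ((m * (2:ℝ) ^ (2 * x / n) * Nk) ^ e1) * c
      = A * ((m * (2:ℝ) ^ (2 * x / n) * Nk) ^ e1 * c) := fun x => by ring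
  calc A * ((m * (2:ℝ) ^ (2 * h1 / n) * Nk) ^ e1) * c / (S + x1) - σ2 / g k
      = A * x1 / (S + x1) - σ2 / g k := by rw [e, ← hx1]
    _ < A * x2 / (S + x2) - σ2 / g k := by linarith
    _ = A * ((m * (2:ℝ) ^ (2 * h2 / n) * Nk) ^ e1) * c / (S + x2) - σ2 / g k := by
        rw [e, ← hx2]
end
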